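/- arXiv:2310.05259 — 9 statements merged into one kernel-verified Lean document; each statement's English description precedes it below -/
import Mathlib

section
/- Let X and Y be self-dense, locally connected, compact metric spaces, let f : X → X and g : Y → Y be homeomorphisms, and let π : Y → X be a continuous surjection with f ∘ π = π ∘ g which is inner-light. If f is inner-distal, then g is inner-distal. -/
/-!
If the proximal cell of `y` had an interior point, local connectedness would give a subcontinuum
`C` with nonempty interior inside it. Since `π` is uniformly continuous and semiconjugates `g` to
`f`, it maps proximal pairs to proximal pairs, so `π '' C` lies in a proximal cell of `f` and has
empty interior; inner-lightness then forces `C` to have empty interior.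
-/

open Metric Set MeasureTheory Filter Topology

/-- The proximal cell of `x` with respect to the iterates `f ^ n`, `n : ℤ`. -/
noncomputable def proximalCell {X : Type*} [MetricSpace X] (f : Equiv.Perm X) (x : X) : Set X :=
  {y | (⨅ n : ℤ, dist ((f ^ n) x) ((f ^ n) y)) = 0}

theorem Function.Semiconj.perm_zpow {X Y : Type*} {f : Equiv.Perm X} {g : Equiv.Perm Y}
    {π : Y → X} (h : Function.Semiconj π g f) : ∀ n : ℤ, Function.Semiconj π ⇑(g ^ n) ⇑(f ^ n)
  | (n : ℕ) => by
    simpa only [zpow_natCast, Equiv.Perm.coe_pow] using h.iterate_right n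
  | .negSucc n => by
    have hn : Function.Semiconj π ⇑(g ^ (n + 1)) ⇑(f ^ (n + 1)) := by
      simpa only [Equiv.Perm.coe_pow] using h.iterate_right (n + 1)
    rw [zpow_negSucc, zpow_negSucc]
    exact hn.inverses_right (g ^ (n + 1)).apply_symm_apply (f ^ (n + 1)).symm_apply_apply

section Proximal

variable {X Y : Type*} [MetricSpace X] [MetricSpace Y]

theorem mem_proximalCell_iff {f : Equiv.Perm X} {x y : X} :
    y ∈ proximalCell f x ↔ ∀ ε > 0, ∃ n : ℤ, dist ((f ^ n) x) ((f ^ n) y) < ε := by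
  have hbdd : BddBelow (range fun n : ℤ => dist ((f ^ n) x) ((f ^ n) y)) :=
    ⟨0, forall_mem_range.2 fun _ => dist_nonneg⟩
  refine ⟨fun h ε hε => exists_lt_of_ciInf_lt (h.symm ▸ hε), fun h => ?_⟩
  refine le_antisymm (le_of_forall_pos_lt_add fun ε hε => ?_) (le_ciInf fun _ => dist_nonneg)
  obtain ⟨n, hn⟩ := h ε hε
  exact (ciInf_le hbdd n).trans_lt (by rwa [zero_add])

theorem UniformContinuous.mapsTo_proximalCell {f : Equiv.Perm X} {g : Equiv.Perm Y}
    {π : Y → X} (hπ : UniformContinuous π) (h : Function.Semiconj π g f) (y : Y) :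
    MapsTo π (proximalCell g y) (proximalCell f (π y)) := by
  intro y' hy'
  rw [mem_proximalCell_iff] at hy' ⊢
  intro ε hε
  obtain ⟨δ, hδ, hδε⟩ := Metric.uniformContinuous_iff.mp hπ ε hε
  obtain ⟨n, hn⟩ := hy' δ hδ
  exact ⟨n, by simpa only [(h.perm_zpow n).eq] using hδε hn⟩

end Proximal

theorem exists_mem_nhds_isCompact_isConnected_subset {Y : Type*} [TopologicalSpace Y]
    [CompactSpace Y] [RegularSpace Y] [LocallyConnectedSpace Y] {u : Y} {U : Set Y}
    (hU : U ∈ 𝓝 u) : ∃ C ∈ 𝓝 u, C ⊆ U ∧ IsCompact C ∧ IsConnected C := by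
  obtain ⟨V, hV, hVc, hVU⟩ := exists_mem_nhds_isClosed_subset hU
  obtain ⟨W, ⟨hWo, huW, hWc⟩, hWV⟩ := (LocallyConnectedSpace.open_connected_basis u).mem_iff.mp hV
  exact ⟨closure W, mem_of_superset (hWo.mem_nhds huW) subset_closure,
    (closure_minimal hWV hVc).trans hVU, isClosed_closure.isCompact, hWc.closure⟩

theorem stmt2_general {X Y : Type*} [MetricSpace X]
    [MetricSpace Y] [CompactSpace Y] [LocallyConnectedSpace Y]
    (f : X ≃ₜ X) (g : Y ≃ₜ Y) (π : Y → X)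
    (hπc : Continuous π)
    (hcomm : ∀ y : Y, f (π y) = π (g y))
    (hlight : ∀ C : Set Y, IsCompact C → IsConnected C →
      interior (π '' C) = (∅ : Set X) → interior C = ∅)
    (hf : ∀ x : X, interior (proximalCell f.toEquiv x) = ∅) :
    ∀ y : Y, interior (proximalCell g.toEquiv y) = ∅ := by
  intro y
  refine eq_empty_iff_forall_notMem.2 fun u hu => ?_
  have hsemiconj : Function.Semiconj π g.toEquiv f.toEquiv := fun y => (hcomm y).symm
  have hπ : MapsTo π (proximalCell g.toEquiv y) (proximalCell f.toEquiv (π y)) :=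
    (CompactSpace.uniformContinuous_of_continuous hπc).mapsTo_proximalCell hsemiconj y
  obtain ⟨C, hCu, hCP, hCc, hCconn⟩ :=
    exists_mem_nhds_isCompact_isConnected_subset (isOpen_interior.mem_nhds hu)
  have hπC_sub : π '' C ⊆ proximalCell f.toEquiv (π y) :=
    (image_mono (hCP.trans interior_subset)).trans hπ.image_subset
  have hπC : interior (π '' C) = ∅ := subset_eq_empty (interior_mono hπC_sub) (hf (π y))
  have hu' : u ∈ interior C := mem_interior_iff_mem_nhds.2 hCu
  rwa [hlight C hCc hCconn hπC] at hu'

/-- An inner-light extension of an inner-distal homeomorphism between self-dense,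
locally connected, compact metric spaces is inner-distal. -/
theorem stmt2 {X Y : Type*} [MetricSpace X] [CompactSpace X] [LocallyConnectedSpace X]
    [MetricSpace Y] [CompactSpace Y] [LocallyConnectedSpace Y]
    (hX : ∀ x : X, ¬ IsOpen ({x} : Set X))
    (hY : ∀ y : Y, ¬ IsOpen ({y} : Set Y))
    (f : X ≃ₜ X) (g : Y ≃ₜ Y) (π : Y → X)
    (hπc : Continuous π) (hπs : Function.Surjective π)
    (hcomm : ∀ y : Y, f (π y) = π (g y))
    (hlight : ∀ C : Set Y, IsCompact C → IsConnected C →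
      interior (π '' C) = (∅ : Set X) → interior C = ∅)
    (hf : ∀ x : X, interior (proximalCell f.toEquiv x) = ∅) :
    ∀ y : Y, interior (proximalCell g.toEquiv y) = ∅ :=
  stmt2_general f g π hπc hcomm hlight hf
end

section
/- Let X be a compact metric space and let f : X → X be a homeomorphism. If there exists a Borel probability measure on X that is inner-distal with respect to f, then there exists an f-invariant Borel probability measure on X that is inner-distal with respect to f. -/
/-
Krylov–Bogolyubov with one extra observation. A weak limit point `ν` of the Cesàro averages
`(1/n) ∑_{k<n} (f^k)_* μ` is `f`-invariant, and by the portmanteau theorem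
`ν U ≤ liminf_n ν_n U` for open `U`. Since `f^k` maps the proximal cell of `x` onto that of
`f^k x`, each preimage `f^{-k}(Int P(x))` lies in the interior of a proximal cell and is
`μ`-null, so every average, hence `ν`, vanishes on `Int P(x)`.
-/

open Metric Set MeasureTheory Filter Topology

open scoped ENNReal BoundedContinuousFunction

lemma preimage_zpow_proximalCell_zpow_apply {X : Type*} [MetricSpace X] (e : Equiv.Perm X)
    (m : ℤ) (x : X) : (e ^ m) ⁻¹' proximalCell e ((e ^ m) x) = proximalCell e x := by
  ext y
  have shift := (Equiv.addRight m).iInf_comp (g := fun n => dist ((e ^ n) x) ((e ^ n) y))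
  simp only [Equiv.coe_addRight] at shift
  simp only [proximalCell, mem_preimage, mem_ofPred_eq, ← Equiv.Perm.mul_apply, ← zpow_add, shift]

lemma Homeomorph.iterate_preimage_interior_proximalCell_subset {X : Type*} [MetricSpace X]
    (f : X ≃ₜ X) (k : ℕ) (x : X) :
    f^[k] ⁻¹' interior (proximalCell f.toEquiv ((f.toEquiv ^ (k : ℤ)) x)) ⊆
      interior (proximalCell f.toEquiv x) := by
  have hiter : (⇑f)^[k] = ⇑(f.toEquiv ^ (k : ℤ)) := by
    rw [zpow_natCast, ← Equiv.Perm.iterate_eq_pow]; rfl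
  have := preimage_interior_subset_interior_preimage
    (t := proximalCell f.toEquiv ((f.toEquiv ^ (k : ℤ)) x)) (f.continuous.iterate k)
  rwa [hiter, preimage_zpow_proximalCell_zpow_apply] at this

namespace MeasureTheory.Measure

variable {X : Type*} [MeasurableSpace X]

noncomputable def pushforwardAverage (f : X → X) (μ : Measure X) (n : ℕ) : Measure X :=
  (n : ℝ≥0∞)⁻¹ • ∑ k ∈ Finset.range n, μ.map f^[k]

variable {f : X → X} {μ : Measure X}

lemma pushforwardAverage_apply (hf : Measurable f) (n : ℕ) {s : Set X} (hs : MeasurableSet s) :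
    pushforwardAverage f μ n s = (n : ℝ≥0∞)⁻¹ * ∑ k ∈ Finset.range n, μ (f^[k] ⁻¹' s) := by
  simp only [pushforwardAverage, smul_apply, finsetSum_apply, map_apply (hf.iterate _) hs,
    smul_eq_mul]

lemma isProbabilityMeasure_pushforwardAverage [IsProbabilityMeasure μ] (hf : Measurable f)
    {n : ℕ} (hn : n ≠ 0) : IsProbabilityMeasure (pushforwardAverage f μ n) := by
  constructor
  simp [pushforwardAverage_apply hf n MeasurableSet.univ, ENNReal.inv_mul_cancel, hn]

lemma pushforwardAverage_apply_eq_zero (hf : Measurable f) (n : ℕ) {s : Set X}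
    (hs : MeasurableSet s) (h : ∀ k, μ (f^[k] ⁻¹' s) = 0) : pushforwardAverage f μ n s = 0 := by
  simp [pushforwardAverage_apply hf n hs, h]

section Integral

variable [TopologicalSpace X] [BorelSpace X] [IsFiniteMeasure μ]

lemma integral_pushforwardAverage (hf : Measurable f) (φ : X →ᵇ ℝ) (n : ℕ) :
    ∫ x, φ x ∂pushforwardAverage f μ n =
      (n : ℝ)⁻¹ * ∑ k ∈ Finset.range n, ∫ x, φ (f^[k] x) ∂μ := by
  rw [pushforwardAverage, integral_smul_measure, integral_finsetSum_measure
    fun k _ => φ.integrable _]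
  simp [integral_map (hf.iterate _).aemeasurable φ.continuous.aestronglyMeasurable]

lemma tendsto_integral_comp_sub_integral_pushforwardAverage (hf : Continuous f) (φ : X →ᵇ ℝ) :
    Tendsto (fun n => ∫ x, φ (f x) ∂pushforwardAverage f μ n - ∫ x, φ x ∂pushforwardAverage f μ n)
      atTop (𝓝 0) := by
  set a : ℕ → ℝ := fun k => ∫ x, φ (f^[k] x) ∂μ
  have ha : ∀ k, ‖a k‖ ≤ ‖φ‖ * μ.real univ := fun k =>
    norm_integral_le_of_norm_le_const (Eventually.of_forall fun x => φ.norm_coe_le_norm _)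
  -- the two averages differ by a telescoping sum
  have htele : ∀ n, ∫ x, φ (f x) ∂pushforwardAverage f μ n - ∫ x, φ x ∂pushforwardAverage f μ n
      = (n : ℝ)⁻¹ * (a n - a 0) := fun n => by
    rw [← Finset.sum_range_sub, Finset.sum_sub_distrib, mul_sub]
    have := integral_pushforwardAverage hf.measurable (φ.compContinuous ⟨f, hf⟩) n (μ := μ)
    simp only [BoundedContinuousFunction.compContinuous_apply, ContinuousMap.coe_mk] at this
    simp only [this, integral_pushforwardAverage hf.measurable φ, a, Function.iterate_succ_apply']
  simp only [htele]
  set C := 2 * (‖φ‖ * μ.real univ)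
  refine squeeze_zero_norm (a := fun n : ℕ => (n : ℝ)⁻¹ * C) (fun n => ?_)
    (by simpa using (tendsto_inv_atTop_nhds_zero_nat (𝕜 := ℝ)).mul_const C)
  rw [norm_mul, norm_inv, Real.norm_natCast]
  gcongr
  exact (norm_sub_le _ _).trans (by linarith [ha n, ha 0])

end Integral

lemma map_eq_self_of_tendsto_pushforwardAverage [TopologicalSpace X] [HasOuterApproxClosed X]
    [BorelSpace X] [IsFiniteMeasure μ] (hf : Continuous f) {ι : Type*} {L : Filter ι}
    [L.NeBot] {u : ι → ℕ} (hu : Tendsto u L atTop) {νs : ι → ProbabilityMeasure X}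
    (hνs : ∀ i, (νs i : Measure X) = pushforwardAverage f μ (u i)) {ν : ProbabilityMeasure X}
    (hlim : Tendsto νs L (𝓝 ν)) : (ν : Measure X).map f = ν := by
  refine ext_of_forall_integral_eq_of_IsFiniteMeasure fun φ => ?_
  rw [integral_map hf.aemeasurable φ.continuous.aestronglyMeasurable, ← sub_eq_zero]
  have hcomp := ProbabilityMeasure.tendsto_iff_forall_integral_tendsto.mp hlim
    (φ.compContinuous ⟨f, hf⟩)
  have hφ := ProbabilityMeasure.tendsto_iff_forall_integral_tendsto.mp hlim φ
  refine tendsto_nhds_unique (hcomp.sub hφ) ?_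
  simp only [hνs]
  exact (tendsto_integral_comp_sub_integral_pushforwardAverage hf φ).comp hu

theorem exists_map_eq_self_and_measure_open_eq_zero [MetricSpace X] [CompactSpace X]
    [BorelSpace X] [IsProbabilityMeasure μ] (hf : Continuous f) :
    ∃ ν : Measure X, IsProbabilityMeasure ν ∧ ν.map f = ν ∧
      ∀ U, IsOpen U → (∀ k, μ (f^[k] ⁻¹' U) = 0) → ν U = 0 := by
  let νs : ℕ → ProbabilityMeasure X := fun n =>
    ⟨pushforwardAverage f μ (n + 1),
      isProbabilityMeasure_pushforwardAverage hf.measurable n.succ_ne_zero⟩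
  obtain ⟨ν, φ, hφ, hlim⟩ := SeqCompactSpace.tendsto_subseq νs
  refine ⟨ν, inferInstance, map_eq_self_of_tendsto_pushforwardAverage hf
    ((tendsto_add_atTop_nat 1).comp hφ.tendsto_atTop) (fun _ => rfl) hlim, fun U hU hnull => ?_⟩
  have hzero : ∀ n, (νs n : Measure X) U = 0 := fun n =>
    pushforwardAverage_apply_eq_zero hf.measurable _ hU.measurableSet hnull
  simpa [hzero] using ProbabilityMeasure.le_liminf_measure_open_of_tendsto hlim hU

end MeasureTheory.Measure

/-- On a compact metric space, if some Borel probability measure is inner-distal with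
respect to a homeomorphism, then some invariant Borel probability measure is inner-distal. -/
theorem stmt4 {X : Type*} [MetricSpace X] [CompactSpace X] [MeasurableSpace X] [BorelSpace X]
    (f : X ≃ₜ X)
    (h : ∃ μ : Measure X, IsProbabilityMeasure μ ∧
      ∀ x : X, μ (interior (proximalCell f.toEquiv x)) = 0) :
    ∃ μ : Measure X, IsProbabilityMeasure μ ∧
      (∀ A : Set X, MeasurableSet A → μ (f ⁻¹' A) = μ A) ∧
      ∀ x : X, μ (interior (proximalCell f.toEquiv x)) = 0 := by
  obtain ⟨μ, hμ, hdistal⟩ := h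
  obtain ⟨ν, hν, hinv, hnull⟩ :=
    Measure.exists_map_eq_self_and_measure_open_eq_zero (μ := μ) f.continuous
  refine ⟨ν, hν, fun A hA => by rw [← Measure.map_apply f.measurable hA, hinv], fun x => ?_⟩
  refine hnull _ isOpen_interior fun k => ?_
  obtain ⟨y, rfl⟩ := (f.toEquiv ^ (k : ℤ)).surjective x
  exact measure_mono_null (f.iterate_preimage_interior_proximalCell_subset k y) (hdistal y)
end

section
/- Let X be a locally connected compact metric space and let f : X → X be a minimal homeomorphism (every orbit {fⁿ(x) : n ∈ ℤ} is dense in X). If there exists a Borel probability measure on X that is inner-distal with respect to f, then f is inner-distal. -/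
open Metric Set MeasureTheory Filter Topology

/-!
Proximality is invariant under the dynamics, so `P (fᵐ x) = fᵐ '' P x` and, `fᵐ` being a
homeomorphism, the same holds for the interiors. If `Int P x` were a nonempty open set,
minimality would make its countably many translates `Int P (fᵐ x)` cover `X`; each of them is
`μ`-null, contradicting `μ X = 1`.
-/

theorem Homeomorph.toEquiv_zpow {X : Type*} [TopologicalSpace X] (f : X ≃ₜ X) (m : ℤ) :
    (f ^ m).toEquiv = f.toEquiv ^ m :=
  map_zpow (⟨⟨Homeomorph.toEquiv, rfl⟩, fun _ _ => rfl⟩ : (X ≃ₜ X) →* Equiv.Perm X) f m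

theorem proximalCell_zpow_apply {X : Type*} [MetricSpace X] (e : Equiv.Perm X) (m : ℤ) (x : X) :
    proximalCell e ((e ^ m) x) = (e ^ m) '' proximalCell e x := by
  ext y
  obtain ⟨z, rfl⟩ := (e ^ m).surjective y
  rw [(e ^ m).injective.mem_set_image]
  simp only [proximalCell, mem_ofPred_eq, ← Equiv.Perm.mul_apply, ← zpow_add]
  exact Iff.of_eq <| congrArg (· = 0) <|
    (Equiv.addRight m).iInf_comp (g := fun n => dist ((e ^ n) x) ((e ^ n) z))

theorem interior_proximalCell_zpow_apply {X : Type*} [MetricSpace X] (f : X ≃ₜ X) (m : ℤ)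
    (x : X) :
    interior (proximalCell f.toEquiv ((f.toEquiv ^ m) x)) =
      (f.toEquiv ^ m) '' interior (proximalCell f.toEquiv x) := by
  rw [proximalCell_zpow_apply, ← Homeomorph.toEquiv_zpow]
  exact ((f ^ m).image_interior _).symm

theorem iUnion_zpow_image_eq_univ_of_dense_orbit {X : Type*} [TopologicalSpace X]
    (e : Equiv.Perm X) (hmin : ∀ x : X, Dense (range fun n : ℤ => (e ^ n) x))
    {U : Set X} (hU : IsOpen U) (hne : U.Nonempty) :
    ⋃ m : ℤ, (e ^ m) '' U = univ := by
  refine eq_univ_of_forall fun z => ?_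
  obtain ⟨_, ⟨n, rfl⟩, hn⟩ := (hmin z).exists_mem_open hU hne
  exact mem_iUnion.2 ⟨-n, (e ^ n) z, hn, by simp [← Equiv.Perm.mul_apply]⟩

theorem stmt5_general {X : Type*} [MetricSpace X]
    [MeasurableSpace X]
    (f : X ≃ₜ X)
    (hmin : ∀ x : X, Dense (Set.range fun n : ℤ => (f.toEquiv ^ n) x))
    (h : ∃ μ : Measure X, IsProbabilityMeasure μ ∧
      ∀ x : X, μ (interior (proximalCell f.toEquiv x)) = 0) :
    ∀ x : X, interior (proximalCell f.toEquiv x) = ∅ := by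
  intro x
  obtain ⟨μ, hμ, hnull⟩ := h
  by_contra hne
  have hcover := iUnion_zpow_image_eq_univ_of_dense_orbit f.toEquiv hmin isOpen_interior
    (nonempty_iff_ne_empty.2 hne)
  have hμ_univ : μ univ = 0 := by
    rw [← hcover]
    refine measure_iUnion_null fun m => ?_
    rw [← interior_proximalCell_zpow_apply]
    exact hnull _
  simp at hμ_univ

/-- On a locally connected compact metric space, a minimal homeomorphism supporting an
inner-distal measure is inner-distal. -/
theorem stmt5 {X : Type*} [MetricSpace X] [CompactSpace X] [LocallyConnectedSpace X]
    [MeasurableSpace X] [BorelSpace X]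
    (f : X ≃ₜ X)
    (hmin : ∀ x : X, Dense (Set.range fun n : ℤ => (f.toEquiv ^ n) x))
    (h : ∃ μ : Measure X, IsProbabilityMeasure μ ∧
      ∀ x : X, μ (interior (proximalCell f.toEquiv x)) = 0) :
    ∀ x : X, interior (proximalCell f.toEquiv x) = ∅ :=
  stmt5_general f hmin h
end

section
/- Let X be a self-dense compact metric space and let f : X → X be an inner-distal, totally transitive homeomorphism. Then the set Per(f) of periodic points of f has empty interior. -/
open Metric Set MeasureTheory Filter Topology

/-- The set of periodic points of an inner-distal totally transitive homeomorphism of a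
self-dense compact metric space has empty interior. -/
theorem stmt10 {X : Type*} [MetricSpace X] [CompactSpace X]
    (hX : ∀ x : X, ¬ IsOpen ({x} : Set X))
    (f : X ≃ₜ X)
    (hf : ∀ x : X, interior (proximalCell f.toEquiv x) = ∅)
    (htt : ∀ n : ℕ, 0 < n →
      ∃ x : X, Dense (Set.range fun m : ℤ => ((f.toEquiv ^ n) ^ m) x)) :
    interior {p : X | ∃ n : ℕ, 0 < n ∧ (f.toEquiv ^ n) p = p} = ∅ := by
  set g := f.toEquiv with hg
  by_contra h
  obtain ⟨x, hx⟩ := htt 1 one_pos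
  simp only [pow_one] at hx
  obtain ⟨y, hyR, hyU⟩ := hx.exists_mem_open isOpen_interior (Set.nonempty_iff_ne_empty.mpr h)
  obtain ⟨m, rfl⟩ := hyR
  obtain ⟨n, hn, hfix⟩ := interior_subset hyU
  have hn0 : (0 : ℤ) < (n : ℤ) := by exact_mod_cast hn
  -- x is fixed by g ^ (n : ℤ)
  have key : Function.IsFixedPt (g ^ (n : ℤ)) x := by
    have h1 := congrArg (⇑(g ^ (-m))) hfix
    rw [← Equiv.Perm.mul_apply, ← Equiv.Perm.mul_apply, ← zpow_natCast g n,
      ← Equiv.Perm.mul_apply, ← zpow_add, ← zpow_add, ← zpow_add] at h1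
    simpa [Function.IsFixedPt, add_comm, add_left_comm] using h1
  -- the orbit is finite
  have hfin : (Set.range fun m : ℤ => (g ^ m) x).Finite := by
    apply Set.Finite.subset ((Set.finite_Icc (0 : ℤ) n).image fun j => (g ^ j) x)
    rintro _ ⟨k, rfl⟩
    refine ⟨k % n, ⟨Int.emod_nonneg _ hn0.ne', le_of_lt ?_⟩, ?_⟩
    · exact Int.emod_lt_of_pos _ hn0
    · show (g ^ (k % (n:ℤ))) x = (g ^ k) x
      conv_rhs => rw [← Int.emod_add_mul_ediv k n]
      rw [zpow_add, Equiv.Perm.mul_apply, zpow_mul, key.perm_zpow (k / n)]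
  -- hence X itself is finite
  have huniv : (Set.univ : Set X).Finite := by
    have hclosed := hfin.isClosed
    have : (Set.range fun m : ℤ => (g ^ m) x) = Set.univ := by
      rw [← hclosed.closure_eq]; exact hx.closure_eq
    rw [← this]; exact hfin
  -- so every singleton is open, contradiction
  exact hX x (isClosed_compl_iff.mp (huniv.subset (Set.subset_univ _)).isClosed)
end

section
/- Let f : X → X be a homeomorphism of a compact metric space and let (μ_n) be a sequence of Borel probability measures, each inner-distal with respect to f, converging in the weak* topology to a Borel probability measure μ. Then μ is inner-distal with respect to f. -/
open Metric Set MeasureTheory Filter Topology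

/- Each `interior (proximalCell f x)` is open, and for an open set `G` the portmanteau theorem gives
`μ G ≤ liminf μₙ G`, so a set that is null for every `μₙ` is null for the weak* limit `μ`. -/

theorem MeasureTheory.ProbabilityMeasure.measure_open_eq_zero_of_tendsto {Ω ι : Type*}
    {L : Filter ι} [L.NeBot] [MeasurableSpace Ω] [TopologicalSpace Ω] [OpensMeasurableSpace Ω]
    [HasOuterApproxClosed Ω] {μ : ProbabilityMeasure Ω} {μs : ι → ProbabilityMeasure Ω}
    (μs_lim : Tendsto μs L (𝓝 μ)) {G : Set Ω} (G_open : IsOpen G)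
    (hG : ∀ᶠ i in L, (μs i : Measure Ω) G = 0) :
    (μ : Measure Ω) G = 0 := by
  have h := ProbabilityMeasure.le_liminf_measure_open_of_tendsto μs_lim G_open
  rwa [liminf_congr hG, liminf_const, nonpos_iff_eq_zero] at h

theorem stmt12_general {X : Type*} [MetricSpace X] [MeasurableSpace X] [BorelSpace X]
    (f : X ≃ₜ X) (μseq : ℕ → Measure X) (μ : Measure X)
    [∀ n, IsProbabilityMeasure (μseq n)] [IsProbabilityMeasure μ]
    (hinner : ∀ n : ℕ, ∀ x : X, (μseq n) (interior (proximalCell f.toEquiv x)) = 0)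
    (hconv : ∀ φ : X → ℝ, Continuous φ →
      Filter.Tendsto (fun n => ∫ x, φ x ∂(μseq n)) Filter.atTop (nhds (∫ x, φ x ∂μ))) :
    ∀ x : X, μ (interior (proximalCell f.toEquiv x)) = 0 := by
  intro x
  have hlim : Tendsto (β := ProbabilityMeasure X) (fun n => ⟨μseq n, inferInstance⟩) atTop
      (𝓝 ⟨μ, inferInstance⟩) :=
    ProbabilityMeasure.tendsto_iff_forall_integral_tendsto.2 fun φ => hconv φ φ.continuous
  exact ProbabilityMeasure.measure_open_eq_zero_of_tendsto hlim isOpen_interior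
    (Eventually.of_forall fun n => hinner n x)

/-- A weak* limit of inner-distal Borel probability measures is inner-distal. -/
theorem stmt12 {X : Type*} [MetricSpace X] [CompactSpace X] [MeasurableSpace X] [BorelSpace X]
    (f : X ≃ₜ X) (μseq : ℕ → Measure X) (μ : Measure X)
    [∀ n, IsProbabilityMeasure (μseq n)] [IsProbabilityMeasure μ]
    (hinner : ∀ n : ℕ, ∀ x : X, (μseq n) (interior (proximalCell f.toEquiv x)) = 0)
    (hconv : ∀ φ : X → ℝ, Continuous φ →
      Filter.Tendsto (fun n => ∫ x, φ x ∂(μseq n)) Filter.atTop (nhds (∫ x, φ x ∂μ))) :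
    ∀ x : X, μ (interior (proximalCell f.toEquiv x)) = 0 :=
  stmt12_general f μseq μ hinner hconv
end

section
/- Let f : X → X and g : Y → Y be homeomorphisms of metric spaces, and equip X × Y with the max metric. If f is inner-distal or g is inner-distal, then the product homeomorphism f × g : X × Y → X × Y, (x,y) ↦ (f(x), g(y)), is inner-distal. -/
open Metric Set MeasureTheory Filter Topology

/-- `prodCongr` as a monoid hom on permutation groups. -/
def prodPermHom (X Y : Type*) : Equiv.Perm X × Equiv.Perm Y →* Equiv.Perm (X × Y) where
  toFun p := p.1.prodCongr p.2
  map_one' := by ext p <;> rfl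
  map_mul' a b := by
    ext p <;> rfl

lemma prodCongr_zpow_apply {X Y : Type*} (e : Equiv.Perm X) (u : Equiv.Perm Y) (n : ℤ)
    (p : X × Y) : ((e.prodCongr u) ^ n) p = ((e ^ n) p.1, (u ^ n) p.2) := by
  have : (e.prodCongr u) ^ n = (e ^ n).prodCongr (u ^ n) := by
    have := map_zpow (prodPermHom X Y) (e, u) n
    simpa [prodPermHom, Prod.pow_def] using this.symm
  rw [this]
  rfl

lemma cell_subset_left {X Y : Type*} [MetricSpace X] [MetricSpace Y]
    (e : Equiv.Perm X) (u : Equiv.Perm Y) (p : X × Y) :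
    proximalCell (e.prodCongr u) p ⊆ (proximalCell e p.1) ×ˢ (univ : Set Y) := by
  intro q hq
  refine ⟨?_, trivial⟩
  simp only [proximalCell, mem_setOf_eq] at hq ⊢
  have key : ∀ n : ℤ, dist ((e ^ n) p.1) ((e ^ n) q.1) ≤
      dist (((e.prodCongr u) ^ n) p) (((e.prodCongr u) ^ n) q) := by
    intro n
    rw [prodCongr_zpow_apply, prodCongr_zpow_apply, Prod.dist_eq]
    exact le_max_left _ _
  refine le_antisymm ?_ (le_ciInf fun n => dist_nonneg)
  calc (⨅ n : ℤ, dist ((e ^ n) p.1) ((e ^ n) q.1))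
      ≤ ⨅ n : ℤ, dist (((e.prodCongr u) ^ n) p) (((e.prodCongr u) ^ n) q) :=
        ciInf_mono ⟨0, fun r ⟨n, hn⟩ => hn ▸ dist_nonneg⟩ key
    _ = 0 := hq

lemma cell_subset_right {X Y : Type*} [MetricSpace X] [MetricSpace Y]
    (e : Equiv.Perm X) (u : Equiv.Perm Y) (p : X × Y) :
    proximalCell (e.prodCongr u) p ⊆ (univ : Set X) ×ˢ (proximalCell u p.2) := by
  intro q hq
  refine ⟨trivial, ?_⟩
  simp only [proximalCell, mem_setOf_eq] at hq ⊢
  have key : ∀ n : ℤ, dist ((u ^ n) p.2) ((u ^ n) q.2) ≤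
      dist (((e.prodCongr u) ^ n) p) (((e.prodCongr u) ^ n) q) := by
    intro n
    rw [prodCongr_zpow_apply, prodCongr_zpow_apply, Prod.dist_eq]
    exact le_max_right _ _
  refine le_antisymm ?_ (le_ciInf fun n => dist_nonneg)
  calc (⨅ n : ℤ, dist ((u ^ n) p.2) ((u ^ n) q.2))
      ≤ ⨅ n : ℤ, dist (((e.prodCongr u) ^ n) p) (((e.prodCongr u) ^ n) q) :=
        ciInf_mono ⟨0, fun r ⟨n, hn⟩ => hn ▸ dist_nonneg⟩ key
    _ = 0 := hq

/-- If f or g is inner-distal then the product homeomorphism f × g (with the max metric on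
the product) is inner-distal. -/
theorem stmt13 {X Y : Type*} [MetricSpace X] [MetricSpace Y]
    (f : X ≃ₜ X) (g : Y ≃ₜ Y)
    (h : (∀ x : X, interior (proximalCell f.toEquiv x) = ∅) ∨
         (∀ y : Y, interior (proximalCell g.toEquiv y) = ∅)) :
    ∀ p : X × Y, interior (proximalCell (f.prodCongr g).toEquiv p) = ∅ := by
  intro p
  have hcongr : (f.prodCongr g).toEquiv = f.toEquiv.prodCongr g.toEquiv := rfl
  rw [hcongr]
  rcases h with h | h
  · have h1 : interior (proximalCell (f.toEquiv.prodCongr g.toEquiv) p) ⊆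
        interior ((proximalCell f.toEquiv p.1) ×ˢ (univ : Set Y)) :=
      interior_mono (cell_subset_left _ _ _)
    rw [interior_prod_eq, h p.1, interior_univ, Set.empty_prod] at h1
    exact eq_empty_of_subset_empty h1
  · have h1 : interior (proximalCell (f.toEquiv.prodCongr g.toEquiv) p) ⊆
        interior ((univ : Set X) ×ˢ (proximalCell g.toEquiv p.2)) :=
      interior_mono (cell_subset_right _ _ _)
    rw [interior_prod_eq, h p.2, interior_univ, Set.prod_empty] at h1
    exact eq_empty_of_subset_empty h1
end

section
/- Let f : X → X be a homeomorphism of a metric space and let k be a nonzero integer. Every Borel probability measure that is inner-distal with respect to f is also inner-distal with respect to f^k. In particular, if f is inner-distal then f^k is inner-distal. -/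
open Metric Set MeasureTheory Filter Topology

section

variable {X : Type*} [MetricSpace X]

/-- The orbit of `(x, y)` under `g ^ k` is a subfamily of its orbit under `g`, so its
distances have a larger infimum. -/
lemma proximalCell_zpow_subset (g : Equiv.Perm X) (k : ℤ) (x : X) :
    proximalCell (g ^ k) x ⊆ proximalCell g x := by
  intro y hy
  have hbdd : BddBelow (range fun n : ℤ => dist ((g ^ n) x) ((g ^ n) y)) :=
    ⟨0, by rintro _ ⟨n, rfl⟩; exact dist_nonneg⟩
  refine le_antisymm ?_ (le_ciInf fun _ => dist_nonneg)
  calc (⨅ n : ℤ, dist ((g ^ n) x) ((g ^ n) y))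
      ≤ ⨅ m : ℤ, dist (((g ^ k) ^ m) x) (((g ^ k) ^ m) y) :=
        le_ciInf fun m => by simpa only [← zpow_mul] using ciInf_le hbdd (k * m)
    _ = 0 := hy

lemma interior_proximalCell_zpow_subset (g : Equiv.Perm X) (k : ℤ) (x : X) :
    interior (proximalCell (g ^ k) x) ⊆ interior (proximalCell g x) :=
  interior_mono (proximalCell_zpow_subset g k x)

end

theorem stmt16_general {X : Type*} [MetricSpace X] [MeasurableSpace X]
    (f : X ≃ₜ X) (k : ℤ) :
    (∀ μ : Measure X, IsProbabilityMeasure μ →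
      (∀ x : X, μ (interior (proximalCell f.toEquiv x)) = 0) →
      ∀ x : X, μ (interior (proximalCell (f.toEquiv ^ k) x)) = 0) ∧
    ((∀ x : X, interior (proximalCell f.toEquiv x) = ∅) →
      ∀ x : X, interior (proximalCell (f.toEquiv ^ k) x) = ∅) :=
  ⟨fun _ _ h x => measure_mono_null (interior_proximalCell_zpow_subset f.toEquiv k x) (h x),
    fun h x => subset_empty_iff.mp
      ((interior_proximalCell_zpow_subset f.toEquiv k x).trans (h x).subset)⟩

/-- Every measure inner-distal with respect to f is inner-distal with respect to f^k;
in particular if f is inner-distal then so is f^k. -/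
theorem stmt16 {X : Type*} [MetricSpace X] [MeasurableSpace X] [BorelSpace X]
    (f : X ≃ₜ X) (k : ℤ) (hk : k ≠ 0) :
    (∀ μ : Measure X, IsProbabilityMeasure μ →
      (∀ x : X, μ (interior (proximalCell f.toEquiv x)) = 0) →
      ∀ x : X, μ (interior (proximalCell (f.toEquiv ^ k) x)) = 0) ∧
    ((∀ x : X, interior (proximalCell f.toEquiv x) = ∅) →
      ∀ x : X, interior (proximalCell (f.toEquiv ^ k) x) = ∅) :=
  stmt16_general f k
end

section
/- Let f be a homeomorphism of the circle S¹ and let μ be a Borel probability measure on S¹ that is inner-distal with respect to f. Then the support of μ is contained in the non-wandering set Ω(f) of f. -/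
/-!
Suppose `x` lies in the support of `μ` but has a wandering neighbourhood `U`. The connected
component `V` of `x` in `U` is open and its iterates `fⁿ V` are pairwise disjoint, so their
Lebesgue measures tend to zero. A connected subset of the circle containing two points has
measure at least half their distance, hence `d(fⁿ x, fⁿ y) → 0` for every `y ∈ V`. Thus the
open set `V` lies in the proximal cell of `x`, so `μ V = 0` by inner-distality, contradicting
`x ∈ supp μ`.
-/

open Metric Set MeasureTheory Filter Topology

open Function

theorem IsOpenMap.iterate {X : Type*} [TopologicalSpace X] {f : X → X} (hf : IsOpenMap f)
    (n : ℕ) : IsOpenMap f^[n] := by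
  induction n with
  | zero => exact IsOpenMap.id
  | succ n ih => exact ih.comp hf

theorem MeasureTheory.tendsto_measure_zero_of_pairwise_disjoint {α : Type*} [MeasurableSpace α]
    {μ : Measure α} [IsFiniteMeasure μ] {s : ℕ → Set α}
    (hs : ∀ n, NullMeasurableSet (s n) μ) (hd : Pairwise (Disjoint on s)) :
    Tendsto (fun n ↦ μ (s n)) atTop (𝓝 0) := by
  refine ENNReal.tendsto_atTop_zero_of_tsum_ne_top ?_
  rw [← measure_iUnion₀ (hd.mono fun _ _ h ↦ h.aedisjoint) hs]
  exact measure_ne_top μ _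

theorem Equiv.Perm.pairwise_disjoint_image_pow {α : Type*} {f : Equiv.Perm α} {V : Set α}
    (hV : ∀ n : ℕ, 0 < n → _root_.Disjoint V ((f ^ n) '' V)) :
    Pairwise (_root_.Disjoint on fun n : ℕ ↦ (f ^ n) '' V) := by
  refine (pairwise_disjoint_on _).2 fun m n hmn ↦ ?_
  obtain ⟨k, rfl⟩ := Nat.exists_eq_add_of_lt hmn
  rw [show m + k + 1 = m + (k + 1) by omega, pow_add, Equiv.Perm.coe_mul, image_comp,
    disjoint_image_iff (f ^ m).injective]
  exact hV (k + 1) k.succ_pos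

theorem mem_proximalCell_of_tendsto {X : Type*} [MetricSpace X] {f : Equiv.Perm X} {x y : X}
    (h : Tendsto (fun n : ℕ ↦ dist ((f ^ n) x) ((f ^ n) y)) atTop (𝓝 0)) :
    y ∈ proximalCell f x := by
  have hbdd : BddBelow (range fun n : ℤ ↦ dist ((f ^ n) x) ((f ^ n) y)) :=
    ⟨0, by rintro _ ⟨n, rfl⟩; exact dist_nonneg⟩
  refine le_antisymm (ge_of_tendsto' h fun n ↦ ?_) (Real.iInf_nonneg fun _ ↦ dist_nonneg)
  simpa only [zpow_natCast] using ciInf_le hbdd (n : ℤ)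

namespace AddCircle

variable {T : ℝ}

instance : LocallyPathConnectedSpace (AddCircle T) :=
  inferInstanceAs (LocallyPathConnectedSpace (Quotient _))

theorem coe_eq_or_eq_neg_of_norm_eq {x t : ℝ} (h : ‖(x : AddCircle T)‖ = t) :
    (x : AddCircle T) = t ∨ (x : AddCircle T) = (-t : ℝ) := by
  rw [norm_eq] at h
  have hx : ((x - round (T⁻¹ * x) * T : ℝ) : AddCircle T) = x := by
    rw [coe_sub, sub_eq_self, coe_eq_zero_iff]
    exact ⟨round (T⁻¹ * x), zsmul_eq_mul _ _⟩
  rw [← hx]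
  rcases (abs_eq (h ▸ abs_nonneg _)).1 h with h | h
  · exact .inl (congrArg _ h)
  · exact .inr (congrArg _ h)

variable [hT : Fact (0 < T)]

theorem volume_preimage_inter_Icc_le {S : Set (AddCircle T)} (hS : MeasurableSet S) (s : ℝ)
    {d : ℝ} (hd : d < T) :
    volume (((↑) : ℝ → AddCircle T) ⁻¹' S ∩ Icc s (s + d)) ≤ volume S := by
  rw [add_projection_respects_measure T (s + d - T) hS]
  exact measure_mono <|
    inter_subset_inter_right _ fun t ht ↦ ⟨by linarith [ht.1], by linarith [ht.2]⟩

theorem ofReal_dist_le_two_mul_volume {S : Set (AddCircle T)} (hS : MeasurableSet S)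
    (hSc : IsPreconnected S) {a b : AddCircle T} (ha : a ∈ S) (hb : b ∈ S) :
    ENNReal.ofReal (dist a b) ≤ 2 * volume S := by
  obtain ⟨a₀, rfl⟩ := QuotientAddGroup.mk_surjective a
  set d := dist (a₀ : AddCircle T) b with hd
  have hdT : d < T := by
    have := norm_le_half_period T (x := b - a₀) hT.out.ne'
    rw [abs_of_pos hT.out] at this
    rw [hd, dist_eq_norm']
    linarith [hT.out]
  have hcover : Icc 0 d ⊆ (a₀ + ·) ⁻¹' ((↑) ⁻¹' S ∩ Icc a₀ (a₀ + d)) ∪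
      (a₀ - ·) ⁻¹' ((↑) ⁻¹' S ∩ Icc (a₀ - d) (a₀ - d + d)) := by
    intro t ht
    -- by the intermediate value theorem `t = dist a₀ y` for some `y ∈ S`, so `y = a₀ ± t`
    obtain ⟨y, hyS, hy⟩ :=
      (hSc.image _ (continuous_const.dist continuous_id).continuousOn).Icc_subset
        ⟨_, ha, dist_self _⟩ ⟨b, hb, rfl⟩ ht
    obtain ⟨y₀, rfl⟩ := QuotientAddGroup.mk_surjective y
    have hy' : ‖((y₀ - a₀ : ℝ) : AddCircle T)‖ = t := by rwa [coe_sub, ← dist_eq_norm']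
    rcases coe_eq_or_eq_neg_of_norm_eq hy' with h | h
    · refine .inl ⟨?_, by linarith [ht.1], by linarith [ht.2]⟩
      change ((a₀ + t : ℝ) : AddCircle T) ∈ S
      rwa [coe_add, ← h, coe_sub, add_sub_cancel]
    · refine .inr ⟨?_, by linarith [ht.2], by linarith [ht.1]⟩
      change ((a₀ - t : ℝ) : AddCircle T) ∈ S
      rwa [sub_eq_add_neg, coe_add, ← h, coe_sub, add_sub_cancel]
  have hmeas (s : ℝ) :
      NullMeasurableSet (((↑) : ℝ → AddCircle T) ⁻¹' S ∩ Icc s (s + d)) :=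
    ((measurable_quotient_mk'' hS).inter measurableSet_Icc).nullMeasurableSet
  calc ENNReal.ofReal d = volume (Icc 0 d) := by rw [Real.volume_Icc, sub_zero]
    _ ≤ volume ((↑) ⁻¹' S ∩ Icc a₀ (a₀ + d)) +
          volume ((↑) ⁻¹' S ∩ Icc (a₀ - d) (a₀ - d + d)) := by
      rw [← measure_preimage_add volume a₀ ((↑) ⁻¹' S ∩ Icc a₀ (a₀ + d)),
        ← (Measure.measurePreserving_sub_left volume a₀).measure_preimage (hmeas _)]
      exact (measure_mono hcover).trans (measure_union_le _ _)
    _ ≤ volume S + volume S :=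
      add_le_add (volume_preimage_inter_Icc_le hS _ hdT) (volume_preimage_inter_Icc_le hS _ hdT)
    _ = 2 * volume S := (two_mul _).symm

theorem tendsto_dist_pow_of_pairwise_disjoint (f : AddCircle T ≃ₜ AddCircle T)
    {V : Set (AddCircle T)} (hV : IsOpen V) (hVc : IsPreconnected V)
    (hd : Pairwise (Disjoint on fun n : ℕ ↦ (f.toEquiv ^ n) '' V)) {x y : AddCircle T}
    (hx : x ∈ V) (hy : y ∈ V) :
    Tendsto (fun n : ℕ ↦ dist ((f.toEquiv ^ n) x) ((f.toEquiv ^ n) y)) atTop (𝓝 0) := by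
  have hopen (n : ℕ) : IsOpen ((f.toEquiv ^ n) '' V) := by
    rw [Equiv.Perm.coe_pow]
    exact f.isOpenMap.iterate n V hV
  have hconn (n : ℕ) : IsPreconnected ((f.toEquiv ^ n) '' V) := by
    rw [Equiv.Perm.coe_pow]
    exact hVc.image _ (f.continuous.iterate n).continuousOn
  have hvol : Tendsto (fun n : ℕ ↦ 2 * volume ((f.toEquiv ^ n) '' V)) atTop (𝓝 0) := by
    simpa using ENNReal.Tendsto.const_mul (tendsto_measure_zero_of_pairwise_disjoint
      (fun n ↦ (hopen n).measurableSet.nullMeasurableSet) hd) (.inr ENNReal.ofNat_ne_top)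
  have hofReal : Tendsto
      (fun n : ℕ ↦ ENNReal.ofReal (dist ((f.toEquiv ^ n) x) ((f.toEquiv ^ n) y)))
      atTop (𝓝 0) :=
    tendsto_of_tendsto_of_tendsto_of_le_of_le tendsto_const_nhds hvol (fun _ ↦ bot_le) fun n ↦
      ofReal_dist_le_two_mul_volume (hopen n).measurableSet (hconn n) (mem_image_of_mem _ hx)
        (mem_image_of_mem _ hy)
  simpa only [ENNReal.toReal_zero] using
    ((ENNReal.tendsto_toReal ENNReal.zero_ne_top).comp hofReal).congr
      fun n ↦ ENNReal.toReal_ofReal dist_nonneg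

end AddCircle

theorem stmt17_general (f : AddCircle (1:ℝ) ≃ₜ AddCircle (1:ℝ))
    (μ : Measure (AddCircle (1:ℝ)))
    (hμ : ∀ x : AddCircle (1:ℝ), μ (interior (proximalCell f.toEquiv x)) = 0) :
    {x : AddCircle (1:ℝ) | ∀ U : Set (AddCircle (1:ℝ)), IsOpen U → x ∈ U → 0 < μ U} ⊆
      {x : AddCircle (1:ℝ) | ∀ U : Set (AddCircle (1:ℝ)), IsOpen U → x ∈ U →
        ∃ n : ℕ, 0 < n ∧ (U ∩ (f.toEquiv ^ (n : ℤ)) '' U).Nonempty} := by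
  intro x hx U hU hxU
  by_contra! hwander
  set V := connectedComponentIn U x
  have hVU : V ⊆ U := connectedComponentIn_subset U x
  have hVopen : IsOpen V := hU.connectedComponentIn
  have hxV : x ∈ V := mem_connectedComponentIn hxU
  have hdisj : Pairwise (Disjoint on fun n : ℕ ↦ (f.toEquiv ^ n) '' V) :=
    Equiv.Perm.pairwise_disjoint_image_pow fun n hn ↦ by
      have := hwander n hn
      rw [zpow_natCast, ← disjoint_iff_inter_eq_empty] at this
      exact this.mono hVU (image_mono hVU)
  have hprox : V ⊆ proximalCell f.toEquiv x := fun y hy ↦ mem_proximalCell_of_tendsto <|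
    AddCircle.tendsto_dist_pow_of_pairwise_disjoint f hVopen isPreconnected_connectedComponentIn
      hdisj hxV hy
  exact (hx V hVopen hxV).ne' (measure_mono_null (hVopen.subset_interior_iff.2 hprox) (hμ x))

/-- The support of an inner-distal measure of a circle homeomorphism is contained in the
non-wandering set. -/
theorem stmt17 (f : AddCircle (1:ℝ) ≃ₜ AddCircle (1:ℝ))
    (μ : Measure (AddCircle (1:ℝ))) [IsProbabilityMeasure μ]
    (hμ : ∀ x : AddCircle (1:ℝ), μ (interior (proximalCell f.toEquiv x)) = 0) :
    {x : AddCircle (1:ℝ) | ∀ U : Set (AddCircle (1:ℝ)), IsOpen U → x ∈ U → 0 < μ U} ⊆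
      {x : AddCircle (1:ℝ) | ∀ U : Set (AddCircle (1:ℝ)), IsOpen U → x ∈ U →
        ∃ n : ℕ, 0 < n ∧ (U ∩ (f.toEquiv ^ (n : ℤ)) '' U).Nonempty} :=
  stmt17_general f μ hμ
end

section
/- Let f : X → X be a totally transitive homeomorphism of a metric space X and let μ be a Borel probability measure on X that is inner-distal with respect to f. If X is μ-Baire, then μ(Int Per(f)) = 0, where Per(f) is the set of periodic points of f. -/
open Metric Set MeasureTheory Filter Topology

/-- A set is μ-nowhere-dense if the interior of its closure is μ-null. -/
def MuNowhereDense {X : Type*} [MetricSpace X] [MeasurableSpace X]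
    (μ : Measure X) (F : Set X) : Prop :=
  μ (interior (closure F)) = 0

/-- A set is μ-meagre if it is a countable union of μ-nowhere-dense sets. -/
def MuMeagre {X : Type*} [MetricSpace X] [MeasurableSpace X]
    (μ : Measure X) (A : Set X) : Prop :=
  ∃ F : ℕ → Set X, (∀ n, MuNowhereDense μ (F n)) ∧ A = ⋃ n, F n

/-- X is μ-Baire if the interior of every μ-meagre set is μ-null. -/
def MuBaire {X : Type*} [MetricSpace X] [MeasurableSpace X] (μ : Measure X) : Prop :=
  ∀ A : Set X, MuMeagre μ A → μ (interior A) = 0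

/-!
The periodic points form the countable union of the closed sets `Fix(fⁿ)`, `n ≥ 1`. If
`Fix(fⁿ)` had interior, a dense `fⁿ`-orbit would enter it, so its base point would be fixed by
`fⁿ`; that point would then be dense and `X` a singleton, whose only proximal cell is all of `X`,
of full measure. So each `Fix(fⁿ)` is closed with empty interior, and `μ`-Baireness applies.
-/

lemma proximalCell_eq_univ {X : Type*} [MetricSpace X] [Subsingleton X]
    (f : Equiv.Perm X) (x : X) : proximalCell f x = univ :=
  eq_univ_of_forall fun y => by simp [proximalCell, Subsingleton.elim x y]

lemma Equiv.Perm.interior_fixedPoints_eq_empty_of_dense_orbit {X : Type*} [TopologicalSpace X]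
    [T1Space X] [Nontrivial X] (g : Equiv.Perm X) {x : X}
    (hx : Dense (range fun m : ℤ => (g ^ m) x)) :
    interior (Function.fixedPoints g) = ∅ := by
  by_contra hne
  obtain ⟨_, ⟨m, rfl⟩, hm⟩ := hx.exists_mem_open isOpen_interior (nonempty_iff_ne_empty.2 hne)
  have hfix : (g ^ m) x ∈ Function.fixedPoints g := interior_subset hm
  have hback : (g ^ m) x = x := by
    simpa only [Function.IsFixedPt, ← Equiv.Perm.mul_apply, ← zpow_add, neg_add_cancel,
      zpow_zero, Equiv.Perm.one_apply] using (hfix.perm_zpow (-m)).symm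
  have hx_fix : Function.IsFixedPt g x := hback ▸ hfix
  have horbit : (range fun m : ℤ => (g ^ m) x) = {x} :=
    eq_singleton_iff_unique_mem.2 ⟨⟨0, rfl⟩, by rintro _ ⟨k, rfl⟩; exact hx_fix.perm_zpow k⟩
  rw [Dense, horbit, closure_singleton] at hx
  obtain ⟨y, hy⟩ := exists_ne x
  exact hy (hx y)

theorem stmt19_general {X : Type*} [MetricSpace X] [MeasurableSpace X]
    (f : X ≃ₜ X) (μ : Measure X) [IsProbabilityMeasure μ]
    (hμ : ∀ x : X, μ (interior (proximalCell f.toEquiv x)) = 0)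
    (htt : ∀ n : ℕ, 0 < n →
      ∃ x : X, Dense (Set.range fun m : ℤ => ((f.toEquiv ^ n) ^ m) x))
    (hBaire : MuBaire μ) :
    μ (interior {p : X | ∃ n : ℕ, 0 < n ∧ (f.toEquiv ^ n) p = p}) = 0 := by
  have : Nontrivial X := by
    obtain ⟨x, -⟩ := htt 1 one_pos
    by_contra h
    rw [not_nontrivial_iff_subsingleton] at h
    simpa [proximalCell_eq_univ] using hμ x
  apply hBaire
  refine ⟨fun k => Function.fixedPoints ⇑(f.toEquiv ^ (k + 1)), fun k => ?_, ?_⟩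
  · have hclosed : IsClosed (Function.fixedPoints ⇑(f.toEquiv ^ (k + 1))) :=
      isClosed_fixedPoints (by rw [Equiv.Perm.coe_pow]; exact f.continuous.iterate _)
    obtain ⟨x, hx⟩ := htt (k + 1) k.succ_pos
    rw [MuNowhereDense, hclosed.closure_eq,
      Equiv.Perm.interior_fixedPoints_eq_empty_of_dense_orbit _ hx, measure_empty]
  · ext p
    simp only [mem_ofPred_eq, mem_iUnion, Function.mem_fixedPoints, Function.IsFixedPt]
    exact ⟨fun ⟨n, hn, hp⟩ => ⟨n - 1, by rwa [Nat.sub_add_cancel hn]⟩,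
      fun ⟨k, hk⟩ => ⟨k + 1, k.succ_pos, hk⟩⟩

/-- For a totally transitive homeomorphism with an inner-distal measure μ such that X is
μ-Baire, the interior of the set of periodic points is μ-null. -/
theorem stmt19 {X : Type*} [MetricSpace X] [MeasurableSpace X] [BorelSpace X]
    (f : X ≃ₜ X) (μ : Measure X) [IsProbabilityMeasure μ]
    (hμ : ∀ x : X, μ (interior (proximalCell f.toEquiv x)) = 0)
    (htt : ∀ n : ℕ, 0 < n →
      ∃ x : X, Dense (Set.range fun m : ℤ => ((f.toEquiv ^ n) ^ m) x))
    (hBaire : MuBaire μ) :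
    μ (interior {p : X | ∃ n : ℕ, 0 < n ∧ (f.toEquiv ^ n) p = p}) = 0 :=
  stmt19_general f μ hμ htt hBaire
end
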